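/- Let t > 0 and let V, M : [0, t] → ℝ be continuous functions with V(s) > 0 and M(s) > 0 for all s ∈ [0, t]. Fix θ₀ = (θ₁₀, θ₂₀) ∈ ℝ², and for θ = (θ₁, θ₂) ∈ ℝ² define m_t(θ) = −(1/2) ∫_0^t [ ((θ₁ − θ₁₀) + (θ₂ − θ₂₀))² V(s) + (θ₁ − θ₁₀)² M(s) ] ds. Then m_t(θ) ≤ 0 for all θ, and m_t(θ) = 0 if and only if θ = θ₀. -/

import Mathlib

/-! After pulling the constants out of the integral, `m θ` is `-(1/2)` times the quadratic form
`(a + b)² ∫V + a² ∫M` in `(a, b) = θ - θ₀`. Both integrals are positive, so the form is positive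
definite: it vanishes only when `a = 0` and then `a + b = 0`. -/

open intervalIntegral

lemma add_sq_mul_add_sq_mul_eq_zero_iff {A B : ℝ} (hA : 0 < A) (hB : 0 < B) (a b : ℝ) :
    (a + b) ^ 2 * A + a ^ 2 * B = 0 ↔ a = 0 ∧ b = 0 := by
  constructor
  · intro h
    have hab : (a + b) ^ 2 * A = 0 ∧ a ^ 2 * B = 0 :=
      (add_eq_zero_iff_of_nonneg (by positivity) (by positivity)).1 h
    have ha : a = 0 := by simpa [hB.ne'] using hab.2
    have hb : a + b = 0 := by simpa [hA.ne'] using hab.1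
    exact ⟨ha, by linarith⟩
  · rintro ⟨rfl, rfl⟩
    ring

lemma integral_pos_of_continuousOn_of_pos {f : ℝ → ℝ} {a b : ℝ} (hab : a < b)
    (hf : ContinuousOn f (Set.Icc a b)) (hpos : ∀ x ∈ Set.Ioo a b, 0 < f x) :
    0 < ∫ x in a..b, f x :=
  intervalIntegral_pos_of_pos_on (hf.intervalIntegrable_of_Icc hab.le) hpos hab

theorem linear_mean_field_identifiability
    (t : ℝ) (ht : 0 < t) (V M : ℝ → ℝ)
    (hVc : ContinuousOn V (Set.Icc 0 t)) (hMc : ContinuousOn M (Set.Icc 0 t))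
    (hV : ∀ s ∈ Set.Icc (0:ℝ) t, 0 < V s) (hM : ∀ s ∈ Set.Icc (0:ℝ) t, 0 < M s)
    (θ₀ : ℝ × ℝ) (m : ℝ × ℝ → ℝ)
    (hm : ∀ θ : ℝ × ℝ, m θ = -(1/2) * ∫ s in (0:ℝ)..t,
      (((θ.1 - θ₀.1) + (θ.2 - θ₀.2)) ^ 2 * V s + (θ.1 - θ₀.1) ^ 2 * M s)) :
    ∀ θ : ℝ × ℝ, m θ ≤ 0 ∧ (m θ = 0 ↔ θ = θ₀) := by
  have hIV : 0 < ∫ s in (0:ℝ)..t, V s :=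
    integral_pos_of_continuousOn_of_pos ht hVc fun s hs => hV s (Set.Ioo_subset_Icc_self hs)
  have hIM : 0 < ∫ s in (0:ℝ)..t, M s :=
    integral_pos_of_continuousOn_of_pos ht hMc fun s hs => hM s (Set.Ioo_subset_Icc_self hs)
  intro θ
  have hmθ : m θ = -(1/2) * ((((θ.1 - θ₀.1) + (θ.2 - θ₀.2)) ^ 2 * ∫ s in (0:ℝ)..t, V s)
      + (θ.1 - θ₀.1) ^ 2 * ∫ s in (0:ℝ)..t, M s) := by
    rw [hm θ, integral_add ((hVc.intervalIntegrable_of_Icc ht.le).const_mul _)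
      ((hMc.intervalIntegrable_of_Icc ht.le).const_mul _), integral_const_mul, integral_const_mul]
  refine ⟨?_, ?_⟩
  · rw [hmθ]
    exact mul_nonpos_of_nonpos_of_nonneg (by norm_num)
      (add_nonneg (mul_nonneg (sq_nonneg _) hIV.le) (mul_nonneg (sq_nonneg _) hIM.le))
  · rw [hmθ, mul_eq_zero, or_iff_right (by norm_num), add_sq_mul_add_sq_mul_eq_zero_iff hIV hIM,
      sub_eq_zero, sub_eq_zero, Prod.ext_iff]
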